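/- Let f_V be an even probability density function on ℝ with finite second moment, and let P > 0 and σ_V > 0. Define f_Y(t) = (1/2){ f_V(t − √P) + f_V(t + √P) }, f_Z(t) = (1/2){ g_{σ_V²}(t − √P) + g_{σ_V²}(t + √P) }, H'(Y) = −∫ f_Y log f_Z and H'(V) = −∫ f_V log g_{σ_V²}. Assuming the integrals involved exist and are finite, H'(Y) − H'(V) = log 2 − ∫_ℝ f_V(t) log{ 1 + exp( (−2√P t − 2P)/σ_V² ) } dt. -/

import Mathlib

open MeasureTheory Real

/-- The centered Gaussian density with variance `v`. -/
noncomputable def gpdf (v t : ℝ) : ℝ :=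
  (Real.sqrt (2 * Real.pi * v))⁻¹ * Real.exp (-t ^ 2 / (2 * v))

lemma gpdf_pos {v : ℝ} (hv : 0 < v) (t : ℝ) : 0 < gpdf v t := by
  unfold gpdf
  have h2 : (0:ℝ) < 2 * Real.pi * v := by positivity
  positivity

lemma gpdf_shift {v : ℝ} (hv : 0 < v) (t a : ℝ) :
    gpdf v (t + a) = gpdf v t * Real.exp ((-2 * a * t - a ^ 2) / (2 * v)) := by
  unfold gpdf
  have h : Real.exp (-(t + a) ^ 2 / (2 * v)) =
      Real.exp (-t ^ 2 / (2 * v)) * Real.exp ((-2 * a * t - a ^ 2) / (2 * v)) := by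
    rw [← Real.exp_add]
    congr 1
    field_simp
    ring
  rw [h]
  ring

/-- The mismatched mutual information `I'(X;Y) = H'(Y) − H'(V)` for the binary-input
channel with even noise density `f_V` equals
`log 2 − ∫ f_V(t) log{1 + exp((−2√P t − 2P)/σ_V²)} dt`. -/
theorem mismatched_MI_formula
    (fV : ℝ → ℝ) (hVm : Measurable fV) (hV0 : ∀ t, 0 ≤ fV t) (hV1 : ∫ t : ℝ, fV t = 1)
    (hVeven : ∀ t, fV (-t) = fV t)
    (hV2 : Integrable (fun t : ℝ => t ^ 2 * fV t))
    (P σV : ℝ) (hP : 0 < P) (hσV : 0 < σV)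
    (fY fZ : ℝ → ℝ)
    (hfY : ∀ t, fY t = (1 / 2) * (fV (t - Real.sqrt P) + fV (t + Real.sqrt P)))
    (hfZ : ∀ t, fZ t = (1 / 2) * (gpdf (σV ^ 2) (t - Real.sqrt P) +
      gpdf (σV ^ 2) (t + Real.sqrt P)))
    (hYZ : Integrable (fun t : ℝ => fY t * Real.log (fZ t)))
    (hVG : Integrable (fun t : ℝ => fV t * Real.log (gpdf (σV ^ 2) t)))
    (hF : Integrable (fun t : ℝ =>
      fV t * Real.log (1 + Real.exp ((-2 * Real.sqrt P * t - 2 * P) / σV ^ 2)))) :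
    (-∫ t : ℝ, fY t * Real.log (fZ t)) - (-∫ t : ℝ, fV t * Real.log (gpdf (σV ^ 2) t)) =
      Real.log 2 -
        ∫ t : ℝ, fV t * Real.log (1 + Real.exp ((-2 * Real.sqrt P * t - 2 * P) / σV ^ 2)) := by
  set s := Real.sqrt P with hs_def
  set v := σV ^ 2 with hv_def
  have hv : 0 < v := by positivity
  have hs2 : s ^ 2 = P := Real.sq_sqrt hP.le
  -- key pointwise identities for fZ shifted
  have hZp : ∀ t, fZ (t + s) =
      (1 / 2) * (gpdf v t * (1 + Real.exp ((-2 * s * t - 2 * P) / v))) := by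
    intro t
    rw [hfZ]
    have h1 : t + s - s = t := by ring
    have h2 : t + s + s = t + 2 * s := by ring
    rw [h1, h2, gpdf_shift hv t (2 * s)]
    have h3 : (-2 * (2 * s) * t - (2 * s) ^ 2) / (2 * v) = (-2 * s * t - 2 * P) / v := by
      rw [← hs2]; field_simp
    rw [h3]; ring
  have hZm : ∀ t, fZ (t - s) =
      (1 / 2) * (gpdf v t * (1 + Real.exp ((2 * s * t - 2 * P) / v))) := by
    intro t
    rw [hfZ]
    have h1 : t - s - s = t + (-(2 * s)) := by ring
    have h2 : t - s + s = t := by ring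
    rw [h1, h2, gpdf_shift hv t (-(2 * s))]
    have h3 : (-2 * (-(2 * s)) * t - (-(2 * s)) ^ 2) / (2 * v) = (2 * s * t - 2 * P) / v := by
      rw [← hs2]; field_simp
    rw [h3]; ring
  have hlog_half : Real.log (1 / 2 : ℝ) = -Real.log 2 := by
    rw [one_div, Real.log_inv]
  -- log decompositions
  have hlogp : ∀ t, Real.log (fZ (t + s)) =
      -Real.log 2 + Real.log (gpdf v t) + Real.log (1 + Real.exp ((-2 * s * t - 2 * P) / v)) := by
    intro t
    rw [hZp t]
    have hg := gpdf_pos hv t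
    have he : (0:ℝ) < 1 + Real.exp ((-2 * s * t - 2 * P) / v) := by positivity
    rw [Real.log_mul (by norm_num) (by positivity), Real.log_mul hg.ne' he.ne', hlog_half,
      add_assoc]
  have hlogm : ∀ t, Real.log (fZ (t - s)) =
      -Real.log 2 + Real.log (gpdf v t) + Real.log (1 + Real.exp ((2 * s * t - 2 * P) / v)) := by
    intro t
    rw [hZm t]
    have hg := gpdf_pos hv t
    have he : (0:ℝ) < 1 + Real.exp ((2 * s * t - 2 * P) / v) := by positivity
    rw [Real.log_mul (by norm_num) (by positivity), Real.log_mul hg.ne' he.ne', hlog_half,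
      add_assoc]
  -- measurability of fZ
  have hZmeas : Measurable fZ := by
    have h : fZ = fun t => (1 / 2) * (gpdf v (t - s) + gpdf v (t + s)) := funext hfZ
    rw [h]
    unfold gpdf
    fun_prop
  -- integrability of fV
  have hVint : Integrable fV := by
    by_contra h
    rw [integral_undef h] at hV1
    norm_num at hV1
  have hfY0 : ∀ t, 0 ≤ fY t := by
    intro t
    rw [hfY t]
    have := hV0 (t - s); have := hV0 (t + s); linarith
  -- integrability of the two pieces of fY * log fZ
  have key : ∀ a : ℝ, (∀ t, fV (t - a) ≤ 2 * fY t) →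
      Integrable (fun t => fV (t - a) * Real.log (fZ t)) := by
    intro a hb
    refine (hYZ.const_mul 2).mono ?_ ?_
    · exact ((hVm.comp (measurable_id.sub_const a)).mul hZmeas.log).aestronglyMeasurable
    · refine Filter.Eventually.of_forall fun t => ?_
      simp only [norm_mul, Real.norm_eq_abs]
      rw [abs_of_nonneg (hV0 _), abs_of_nonneg (hfY0 t),
        abs_of_nonneg (by norm_num : (0:ℝ) ≤ 2), ← mul_assoc]
      exact mul_le_mul_of_nonneg_right (hb t) (abs_nonneg _)
  have hI1 : Integrable (fun t => fV (t - s) * Real.log (fZ t)) := by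
    refine key s fun t => ?_
    rw [hfY t]; have := hV0 (t + s); linarith
  have hI2 : Integrable (fun t => fV (t + s) * Real.log (fZ t)) := by
    have h := key (-s) (fun t => by
      rw [sub_neg_eq_add, hfY t]; have := hV0 (t - s); linarith)
    simpa [sub_neg_eq_add] using h
  -- integrability of the even-reflected F-term
  have hFneg : (fun t => fV t * Real.log (1 + Real.exp ((2 * s * t - 2 * P) / v))) =
      fun t => (fun u => fV u * Real.log (1 + Real.exp ((-2 * s * u - 2 * P) / v))) (-t) := by
    funext t
    simp only
    rw [hVeven]
    ring_nf
  have hF' : Integrable (fun t => fV t * Real.log (1 + Real.exp ((2 * s * t - 2 * P) / v))) := by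
    rw [hFneg]
    exact hF.comp_neg
  have hFeq : ∫ t, fV t * Real.log (1 + Real.exp ((2 * s * t - 2 * P) / v)) =
      ∫ t, fV t * Real.log (1 + Real.exp ((-2 * s * t - 2 * P) / v)) := by
    rw [hFneg]
    exact integral_neg_eq_self
      (fun u => fV u * Real.log (1 + Real.exp ((-2 * s * u - 2 * P) / v))) volume
  -- compute the shifted integrals
  set G := ∫ t, fV t * Real.log (gpdf v t) with hG_def
  set F := ∫ t, fV t * Real.log (1 + Real.exp ((-2 * s * t - 2 * P) / v)) with hF_def
  have hint1 : ∫ t, fV (t - s) * Real.log (fZ t) = -Real.log 2 + G + F := by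
    have h1 : ∫ t, fV (t - s) * Real.log (fZ t) = ∫ t, fV t * Real.log (fZ (t + s)) := by
      rw [← integral_add_right_eq_self (μ := volume)
        (fun t => fV (t - s) * Real.log (fZ t)) s]
      simp
    rw [h1]
    have h2 : (fun t => fV t * Real.log (fZ (t + s))) = fun t =>
        (-Real.log 2 * fV t + fV t * Real.log (gpdf v t)) +
          fV t * Real.log (1 + Real.exp ((-2 * s * t - 2 * P) / v)) := by
      funext t; rw [hlogp t]; ring
    have hA : Integrable (fun t : ℝ => -Real.log 2 * fV t + fV t * Real.log (gpdf v t)) :=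
      (hVint.const_mul _).add hVG
    rw [h2, integral_add hA hF, integral_add (hVint.const_mul _) hVG, integral_const_mul, hV1]
    ring
  have hint2 : ∫ t, fV (t + s) * Real.log (fZ t) = -Real.log 2 + G + F := by
    have h1 : ∫ t, fV (t + s) * Real.log (fZ t) = ∫ t, fV t * Real.log (fZ (t - s)) := by
      rw [← integral_sub_right_eq_self (μ := volume)
        (fun t => fV (t + s) * Real.log (fZ t)) s]
      simp
    rw [h1]
    have h2 : (fun t => fV t * Real.log (fZ (t - s))) = fun t =>
        (-Real.log 2 * fV t + fV t * Real.log (gpdf v t)) +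
          fV t * Real.log (1 + Real.exp ((2 * s * t - 2 * P) / v)) := by
      funext t; rw [hlogm t]; ring
    have hA : Integrable (fun t : ℝ => -Real.log 2 * fV t + fV t * Real.log (gpdf v t)) :=
      (hVint.const_mul _).add hVG
    rw [h2, integral_add hA hF', integral_add (hVint.const_mul _) hVG, integral_const_mul, hV1,
      hFeq]
    ring
  -- combine
  have hmain : ∫ t, fY t * Real.log (fZ t) = -Real.log 2 + G + F := by
    have h2 : (fun t => fY t * Real.log (fZ t)) = fun t =>
        (1 / 2) * (fV (t - s) * Real.log (fZ t)) + (1 / 2) * (fV (t + s) * Real.log (fZ t)) := by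
      funext t; rw [hfY t]; ring
    rw [h2, integral_add (hI1.const_mul _) (hI2.const_mul _), integral_const_mul,
      integral_const_mul, hint1, hint2]
    ring
  rw [hmain]
  ring
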